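/- Let K be a commutative integral domain, let Γ be a finitely generated torsion-free abelian group, and let Φ be the convex hull of finitely many group homomorphisms φ₁, …, φ_m : Γ → ℝ. Then the Novikov ring Λ^K_Φ(Γ) is a commutative integral domain. -/

import Mathlib

/-!
Nonzero elements of the Novikov ring have leading terms. Pick one functional `ψ` of the polytope
(every element is `ψ`-finite) and refine `ψ` by a lexicographic order on `Γ ≅ ℤⁿ`: the resulting
injective order-preserving hom `Γ → ℝ ×ₗ ℤⁿ` has a least element on the support of every nonzero
element, and the product of the two least elements is the unique contribution to the coefficient of
the sum of their exponents. When the polytope is empty every function is in the ring; for infinite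
`Γ` the junk value `0` of infinite `finsum`s then breaks distributivity, and for finite `Γ` the
zero functional works.
-/

/-- The underlying set of the Novikov ring `Λ^K_Φ(Γ)` determined by a set `Φ` of
group homomorphisms `Γ → ℝ`: functions `r : Γ → K` satisfying the Novikov
multi-finiteness condition, i.e. for every `φ ∈ Φ` and every `c : ℝ` only finitely
many `γ` with `φ γ < c` have `r γ ≠ 0`. -/
def NovikovMultiSet (K : Type*) [Zero K] {Γ : Type*} [AddCommGroup Γ]
    (Φ : Set (Γ →+ ℝ)) : Set (Γ → K) :=
  {r | ∀ φ ∈ Φ, ∀ c : ℝ, {γ : Γ | r γ ≠ 0 ∧ φ γ < c}.Finite}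

/-- A commutative ring structure on a set `S` of functions `Γ → K` is a Novikov ring
structure if addition is pointwise and multiplication is the convolution product
`(r·s)(γ) = Σ_{α+β=γ} r(α)s(β)`. -/
def IsNovikovRingStructure {K Γ : Type*} [CommRing K] [AddCommGroup Γ]
    (S : Set (Γ → K)) [CommRing ↥S] : Prop :=
  (∀ a b : ↥S, ∀ γ : Γ, ((a + b : ↥S) : Γ → K) γ = a.1 γ + b.1 γ) ∧
  (∀ a b : ↥S, ∀ γ : Γ, ((a * b : ↥S) : Γ → K) γ = ∑ᶠ α : Γ, a.1 α * b.1 (γ - α))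

open Function

section

variable {K Γ : Type*}

theorem exists_forall_support_le [Zero K] {N : Type*} [LinearOrder N] (ψ : Γ → ℝ) (E : Γ → N)
    (hE : ∀ x y, ψ x < ψ y → E x < E y) {f : Γ → K} (hf : f ≠ 0)
    (hfin : ∀ c : ℝ, {γ : Γ | f γ ≠ 0 ∧ ψ γ < c}.Finite) :
    ∃ α₀, f α₀ ≠ 0 ∧ ∀ x, f x ≠ 0 → E α₀ ≤ E x := by
  obtain ⟨a₁, ha₁⟩ := Function.ne_iff.mp hf
  obtain ⟨α₀, ⟨hα₀, hψα₀⟩, hmin⟩ :=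
    Set.exists_min_image _ E (hfin (ψ a₁ + 1)) ⟨a₁, ha₁, by linarith⟩
  refine ⟨α₀, hα₀, fun x hx => ?_⟩
  by_cases hψx : ψ x < ψ a₁ + 1
  · exact hmin x ⟨hx, hψx⟩
  · exact (hE α₀ x (by linarith)).le

section LeadingTerm

variable [AddCommGroup Γ]

theorem finsum_mul_sub_eq_mul_of_forall_le [NonUnitalNonAssocSemiring K] {N : Type*}
    [AddCommMonoid N] [LinearOrder N] [IsOrderedCancelAddMonoid N] (E : Γ →+ N) (hE : Injective E)
    {a b : Γ → K} {α₀ β₀ : Γ} (ha : ∀ x, a x ≠ 0 → E α₀ ≤ E x) (hb : ∀ x, b x ≠ 0 → E β₀ ≤ E x) :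
    ∑ᶠ α, a α * b (α₀ + β₀ - α) = a α₀ * b β₀ := by
  rw [finsum_eq_single _ α₀ fun x hx => ?_, add_sub_cancel_left]
  by_contra h
  have hlt : E α₀ + E β₀ < E x + E (α₀ + β₀ - x) :=
    add_lt_add_of_lt_of_le ((ha x (left_ne_zero_of_mul h)).lt_of_ne (hE.ne hx.symm))
      (hb _ (right_ne_zero_of_mul h))
  rw [← map_add, ← map_add, add_sub_cancel] at hlt
  exact hlt.false

theorem AddGroup.FG.exists_addEquiv_fin_pi_int [AddGroup.FG Γ] [IsAddTorsionFree Γ] :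
    ∃ n : ℕ, Nonempty (Γ ≃+ (Fin n → ℤ)) := by
  have : Module.Finite ℤ Γ := Module.Finite.iff_addGroup_fg.mpr ‹_›
  have : Module.Free ℤ Γ := Module.free_of_finite_type_torsion_free'
  exact ⟨_, ⟨(Module.finBasis ℤ Γ).equivFun.toAddEquiv⟩⟩

theorem exists_finsum_mul_sub_ne_zero [NonUnitalNonAssocSemiring K] [NoZeroDivisors K]
    [AddGroup.FG Γ] [IsAddTorsionFree Γ] (ψ : Γ →+ ℝ) {a b : Γ → K}
    (hfa : ∀ c : ℝ, {γ : Γ | a γ ≠ 0 ∧ ψ γ < c}.Finite)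
    (hfb : ∀ c : ℝ, {γ : Γ | b γ ≠ 0 ∧ ψ γ < c}.Finite) (ha : a ≠ 0) (hb : b ≠ 0) :
    ∃ γ, ∑ᶠ α, a α * b (γ - α) ≠ 0 := by
  obtain ⟨n, ⟨e⟩⟩ := AddGroup.FG.exists_addEquiv_fin_pi_int (Γ := Γ)
  let E : Γ →+ ℝ ×ₗ Lex (Fin n → ℤ) := (toLexAddEquiv _).toAddMonoidHom.comp
    (ψ.prod ((toLexAddEquiv _).toAddMonoidHom.comp e.toAddMonoidHom))
  have hE : Injective E := fun x y h => e.injective (congrArg (fun p => ofLex (ofLex p).2) h)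
  have hψE : ∀ x y, ψ x < ψ y → E x < E y := fun x y h => Prod.Lex.toLex_lt_toLex.mpr (.inl h)
  obtain ⟨α₀, hα₀, hαmin⟩ := exists_forall_support_le ψ E hψE ha hfa
  obtain ⟨β₀, hβ₀, hβmin⟩ := exists_forall_support_le ψ E hψE hb hfb
  refine ⟨α₀ + β₀, ?_⟩
  rw [finsum_mul_sub_eq_mul_of_forall_le E hE hαmin hβmin]
  exact mul_ne_zero hα₀ hβ₀

end LeadingTerm

theorem mem_novikovMultiSet_of_finite_support [Zero K] [AddCommGroup Γ] {Φ : Set (Γ →+ ℝ)}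
    {r : Γ → K} (hr : (support r).Finite) : r ∈ NovikovMultiSet K Φ :=
  fun _ _ _ => hr.subset fun _ hγ => hγ.1

namespace IsNovikovRingStructure

variable [CommRing K] [AddCommGroup Γ] {S : Set (Γ → K)} [CommRing S]

theorem coe_zero (hS : IsNovikovRingStructure S) : ((0 : S) : Γ → K) = 0 :=
  funext fun γ => left_eq_add.mp (by rw [← hS.1 0 0, add_zero])

theorem nontrivial (hS : IsNovikovRingStructure S) {r : Γ → K} (hr : r ∈ S) (hr0 : r ≠ 0) :
    Nontrivial S :=
  ⟨⟨r, hr⟩, 0, fun h => hr0 (by simpa [hS.coe_zero] using congrArg Subtype.val h)⟩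

theorem noZeroDivisors (hS : IsNovikovRingStructure S)
    (h : ∀ a ∈ S, ∀ b ∈ S, a ≠ 0 → b ≠ 0 → ∃ γ, ∑ᶠ α, a α * b (γ - α) ≠ 0) :
    NoZeroDivisors S where
  eq_zero_or_eq_zero_of_mul_eq_zero {a b} hab := by
    by_contra! hne
    have hcoe : ∀ x : S, x ≠ 0 → (x : Γ → K) ≠ 0 := fun x hx h0 =>
      hx (Subtype.ext (h0.trans hS.coe_zero.symm))
    obtain ⟨γ, hγ⟩ := h a a.2 b b.2 (hcoe a hne.1) (hcoe b hne.2)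
    rw [← hS.2, hab, hS.coe_zero] at hγ
    exact hγ rfl

/-- With `u = 1` and `v = δ₀ - 1`, the products `u * u` and `v * u` have infinitely supported
convolution sums at `0`, hence coefficient `0` there, while `(u + v) * u = δ₀ * u = u`. -/
theorem false_of_forall_mem [Infinite Γ] [Nontrivial K] (hS : IsNovikovRingStructure S)
    (hall : ∀ r, r ∈ S) : False := by
  classical
  let u : S := ⟨fun _ => 1, hall _⟩
  let v : S := ⟨fun γ => if γ = 0 then 0 else -1, hall _⟩
  have hadd : ∀ γ, (u + v).1 γ = if γ = 0 then 1 else 0 := fun γ => by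
    rw [hS.1]; split_ifs <;> simp [u, v, *]
  have h₁ : ((u + v) * u).1 0 = 1 := by
    rw [hS.2, finsum_eq_single _ 0 fun x hx => by simp [hadd, hx]]
    simp [hadd, u]
  have h₂ : (u * u).1 0 = 0 := by
    rw [hS.2]
    refine finsum_of_infinite_support ?_
    simpa [u, support_const] using Set.infinite_univ (α := Γ)
  have h₃ : (v * u).1 0 = 0 := by
    rw [hS.2]
    refine finsum_of_infinite_support ?_
    convert (Set.finite_singleton (0 : Γ)).infinite_compl using 1
    ext x
    by_cases hx : x = 0 <;> simp [u, v, hx]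
  have := congrFun (congrArg Subtype.val (add_mul u v u)) 0
  rw [h₁, hS.1, h₂, h₃, add_zero] at this
  exact one_ne_zero this

end IsNovikovRingStructure

end

/-- Let `K` be a commutative integral domain, `Γ` a finitely generated torsion-free
abelian group, and `Φ` the convex hull of finitely many group homomorphisms
`φ₁, …, φ_m : Γ → ℝ`.  Then the Novikov ring `Λ^K_Φ(Γ)` is a commutative integral
domain. -/
theorem novikovRing_polytope_isDomain
    (K : Type*) [CommRing K] [IsDomain K]
    (Γ : Type*) [AddCommGroup Γ] [AddGroup.FG Γ] (hTF : ∀ g : Γ, g ≠ 0 → ¬IsOfFinAddOrder g)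
    (m : ℕ) (φ : Fin m → (Γ →+ ℝ))
    [CommRing ↥(NovikovMultiSet K (convexHull ℝ (Set.range φ)))]
    (hS : IsNovikovRingStructure (NovikovMultiSet K (convexHull ℝ (Set.range φ)))) :
    IsDomain ↥(NovikovMultiSet K (convexHull ℝ (Set.range φ))) := by
  classical
  have : IsAddTorsionFree Γ := isAddTorsionFree_iff_not_isOfFinAddOrder.2 hTF
  have := hS.nontrivial (r := Pi.single 0 1)
    (mem_novikovMultiSet_of_finite_support
      ((Set.finite_singleton 0).subset Pi.support_single_subset))
    (Pi.single_ne_zero_iff.mpr one_ne_zero)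
  obtain ⟨ψ, hψ⟩ : ∃ ψ : Γ →+ ℝ, ∀ r ∈ NovikovMultiSet K (convexHull ℝ (Set.range φ)),
      ∀ c : ℝ, {γ | r γ ≠ 0 ∧ ψ γ < c}.Finite := by
    rcases (Set.range φ).eq_empty_or_nonempty with hΦ | ⟨ψ, hψ⟩
    · rcases finite_or_infinite Γ with _ | _
      · exact ⟨0, fun _ _ _ => Set.toFinite _⟩
      · exact (hS.false_of_forall_mem fun _ χ hχ => by simp [hΦ] at hχ).elim
    · exact ⟨ψ, fun r hr => hr _ (subset_convexHull ℝ _ hψ)⟩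
  have := hS.noZeroDivisors fun a ha b hb =>
    exists_finsum_mul_sub_ne_zero ψ (hψ a ha) (hψ b hb)
  exact NoZeroDivisors.to_isDomain _
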